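/- Let ε > 0 and δ ∈ (0,1) satisfy δ·(e^ε + 1) ≤ 1, set μ = (1/ε)·ln(δ·(e^ε + 1)) − 1 (so μ ≤ −1), and let w(x) = ((e^ε − 1)/(e^ε + 1))·exp(−ε·|x − μ|) for x ∈ ℤ. For an input count c ∈ ℤ, define the output measure of the negative one-sided Laplace mechanism by M_c(S) = ∑_{x ∈ ℤ, c + min(0,x) ∈ S} w(x) for S ⊆ ℤ. Then for all integers c, c′ with |c − c′| ≤ 1 and all sets S ⊆ ℤ, M_c(S) ≤ e^ε · M_{c′}(S) + δ. -/

import Mathlib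

/-!
Write `s = c - c'`. For `x < 0` the sample `x` moves the count `c` to the same output as the
sample `x + s` moves `c'`, and the weights of `x` and `x + s` differ by a factor at most `e^ε`.
Every sample `x ≥ 0` is charged to `δ` instead: since `μ ≤ 0` the weight is geometric on `ℕ`, and
`μ` is chosen exactly so that its total mass there is `e^{ε(μ+1)} / (e^ε + 1) = δ`.
-/

open Real

noncomputable section

def negOneSidedMechanism (w : ℤ → ℝ) (c : ℤ) (S : Set ℤ) : ℝ :=
  ∑' x : ℤ, S.indicator (fun _ => w x) (c + min 0 x)

section Mechanism

variable {w : ℤ → ℝ} {r : ℝ}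

lemma summable_indicator_negOneSided (hw0 : 0 ≤ w) (hws : Summable w) (c : ℤ) (S : Set ℤ) :
    Summable fun x : ℤ => S.indicator (fun _ => w x) (c + min 0 x) :=
  hws.of_nonneg_of_le (fun x => Set.indicator_nonneg (fun _ _ => hw0 x) _)
    (fun x => Set.indicator_le_self' (fun _ _ => hw0 x) _)

lemma tsum_indicator_Ici_zero_int {α : Type*} [AddCommMonoid α] [TopologicalSpace α]
    (f : ℤ → α) :
    ∑' x : ℤ, (Set.Ici 0).indicator f x = ∑' n : ℕ, f n := by
  rw [← Nat.cast_injective.tsum_eq (by simp)]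
  exact tsum_congr fun n => Set.indicator_of_mem (Int.natCast_nonneg n) f

lemma indicator_negOneSided_le (hw0 : 0 ≤ w) (hr : 0 ≤ r)
    (hwr : ∀ x y : ℤ, |x - y| ≤ 1 → w x ≤ r * w y) {c c' : ℤ} (hcc' : |c - c'| ≤ 1)
    (S : Set ℤ) (x : ℤ) :
    S.indicator (fun _ => w x) (c + min 0 x) ≤
      r * S.indicator (fun _ => w (x + (c - c'))) (c' + min 0 (x + (c - c')))
        + (Set.Ici 0).indicator w x := by
  rw [abs_le] at hcc'
  rcases lt_or_ge x 0 with hx | hx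
  · have hout : c' + min 0 (x + (c - c')) = c + min 0 x := by omega
    rw [hout, Set.indicator_of_notMem (s := Set.Ici 0) (by simpa using hx), add_zero]
    by_cases hS : c + min 0 x ∈ S
    · simp only [Set.indicator_of_mem hS]
      exact hwr _ _ (by rw [abs_le]; omega)
    · simp [Set.indicator_of_notMem hS]
  · rw [Set.indicator_of_mem (Set.mem_Ici.2 hx)]
    exact le_add_of_nonneg_of_le (mul_nonneg hr (Set.indicator_nonneg (fun _ _ => hw0 _) _))
      (Set.indicator_le_self' (fun _ _ => hw0 x) _)

theorem negOneSidedMechanism_le (hw0 : 0 ≤ w) (hws : Summable w) (hr : 0 ≤ r)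
    (hwr : ∀ x y : ℤ, |x - y| ≤ 1 → w x ≤ r * w y) {c c' : ℤ} (hcc' : |c - c'| ≤ 1)
    (S : Set ℤ) :
    negOneSidedMechanism w c S ≤ r * negOneSidedMechanism w c' S + ∑' n : ℕ, w n := by
  set g : ℤ → ℝ := fun y => S.indicator (fun _ => w y) (c' + min 0 y)
  have hg : Summable g := summable_indicator_negOneSided hw0 hws c' S
  have hshift : Summable fun x => r * g (x + (c - c')) :=
    ((Equiv.addRight (c - c')).summable_iff.2 hg).mul_left r
  have htail : Summable ((Set.Ici 0).indicator w) := hws.indicator _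
  calc negOneSidedMechanism w c S
      ≤ ∑' x : ℤ, (r * g (x + (c - c')) + (Set.Ici 0).indicator w x) :=
        (summable_indicator_negOneSided hw0 hws c S).tsum_le_tsum
          (indicator_negOneSided_le hw0 hr hwr hcc' S) (hshift.add htail)
    _ = r * negOneSidedMechanism w c' S + ∑' n : ℕ, w n := by
        rw [hshift.tsum_add htail, tsum_mul_left, tsum_indicator_Ici_zero_int]
        exact congrArg (r * · + _) ((Equiv.addRight (c - c')).tsum_eq g)

end Mechanism

def laplaceWeight (ε μ : ℝ) (x : ℤ) : ℝ :=
  (exp ε - 1) / (exp ε + 1) * exp (-ε * |(x : ℝ) - μ|)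

section Laplace

variable {ε : ℝ}

lemma laplaceWeight_nonneg (hε : 0 ≤ ε) (μ : ℝ) : 0 ≤ laplaceWeight ε μ := fun x => by
  have : 1 ≤ exp ε := one_le_exp hε
  unfold laplaceWeight
  positivity

lemma summable_exp_neg_mul_abs_int (hε : 0 < ε) :
    Summable fun x : ℤ => exp (-ε * |(x : ℝ)|) := by
  refine .of_nat_of_neg ?_ ?_ <;>
    exact summable_exp_nat_mul_of_ge (neg_lt_zero.2 hε) fun i => by simp

lemma summable_laplaceWeight (hε : 0 < ε) (μ : ℝ) : Summable (laplaceWeight ε μ) := by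
  refine (((summable_exp_neg_mul_abs_int hε).mul_left (exp (ε * |μ|))).of_nonneg_of_le
    (fun _ => (exp_pos _).le) fun x => ?_).mul_left ((exp ε - 1) / (exp ε + 1))
  rw [← exp_add]
  gcongr
  linarith [mul_le_mul_of_nonneg_left (abs_sub_abs_le_abs_sub (x : ℝ) μ) hε.le]

lemma laplaceWeight_le_exp_mul (hε : 0 ≤ ε) (μ : ℝ) {x y : ℤ} (hxy : |x - y| ≤ 1) :
    laplaceWeight ε μ x ≤ exp ε * laplaceWeight ε μ y := by
  have hxy' : |(x : ℝ) - y| ≤ 1 := by exact_mod_cast hxy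
  have : 1 ≤ exp ε := one_le_exp hε
  unfold laplaceWeight
  rw [mul_left_comm, ← exp_add]
  gcongr
  have hdist : |(y : ℝ) - μ| ≤ |(x : ℝ) - μ| + 1 := by
    linarith [abs_sub_le (y : ℝ) x μ, abs_sub_comm (x : ℝ) y]
  linarith [mul_le_mul_of_nonneg_left hdist hε]

lemma tsum_laplaceWeight_natCast {μ : ℝ} (hε : 0 < ε) (hμ : μ ≤ 0) :
    ∑' n : ℕ, laplaceWeight ε μ n = exp (ε * (μ + 1)) / (exp ε + 1) := by
  have hterm : ∀ n : ℕ, laplaceWeight ε μ n =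
      (exp ε - 1) / (exp ε + 1) * exp (ε * μ) * exp (-ε) ^ n := by
    intro n
    rw [laplaceWeight, Int.cast_natCast, abs_of_nonneg (by linarith [n.cast_nonneg (α := ℝ)]),
      ← exp_nat_mul, mul_assoc, ← exp_add]
    ring_nf
  have hE : exp ε - 1 ≠ 0 := (sub_pos.2 (one_lt_exp_iff.2 hε)).ne'
  rw [tsum_congr hterm, tsum_mul_left,
    tsum_geometric_of_lt_one (exp_pos _).le (exp_lt_one_iff.2 (neg_lt_zero.2 hε)),
    exp_neg, mul_add, mul_one, exp_add]
  field_simp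

end Laplace

end

/-- **(ε, δ)-DP of the negative one-sided Laplace mechanism.**
The mechanism on input count `c` outputs `c + min 0 z` where `z : ℤ` is drawn
with weight `w x = ((e^ε − 1)/(e^ε + 1)) · exp (−ε·|x − μ|)`,
`μ = (1/ε)·ln (δ·(e^ε + 1)) − 1`.  For all neighboring counts `c, c'`
(`|c − c'| ≤ 1`) and output sets `S ⊆ ℤ`, `M c S ≤ e^ε · M c' S + δ`. -/
theorem negative_one_sided_laplace_dp
    (ε δ : ℝ) (hε : 0 < ε) (hδ : δ ∈ Set.Ioo (0 : ℝ) 1)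
    (hδε : δ * (Real.exp ε + 1) ≤ 1)
    (μ : ℝ) (hμ : μ = (1 / ε) * Real.log (δ * (Real.exp ε + 1)) - 1)
    (w : ℤ → ℝ)
    (hw : ∀ x : ℤ, w x =
      ((Real.exp ε - 1) / (Real.exp ε + 1)) * Real.exp (-ε * |(x : ℝ) - μ|))
    (M : ℤ → Set ℤ → ℝ)
    (hM : ∀ (c : ℤ) (S : Set ℤ),
      M c S = ∑' x : ℤ, S.indicator (fun _ => w x) (c + min 0 x))
    (c c' : ℤ) (hcc' : |c - c'| ≤ 1) (S : Set ℤ) :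
    M c S ≤ Real.exp ε * M c' S + δ := by
  obtain rfl : w = laplaceWeight ε μ := funext hw
  obtain rfl : M = negOneSidedMechanism (laplaceWeight ε μ) := funext fun c => funext (hM c)
  have hmass : 0 < δ * (exp ε + 1) := mul_pos hδ.1 (by positivity)
  have hμ_succ : ε * (μ + 1) = log (δ * (exp ε + 1)) := by
    rw [hμ]
    field_simp
    ring
  have hμ_nonpos : μ ≤ 0 := by
    have := nonpos_of_mul_nonpos_right (hμ_succ ▸ log_nonpos hmass.le hδε) hε
    linarith
  have htail : ∑' n : ℕ, laplaceWeight ε μ n = δ := by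
    rw [tsum_laplaceWeight_natCast hε hμ_nonpos, hμ_succ, exp_log hmass]
    field_simp
  exact htail ▸ negOneSidedMechanism_le (laplaceWeight_nonneg hε.le μ)
    (summable_laplaceWeight hε μ) (exp_pos ε).le
    (fun _ _ => laplaceWeight_le_exp_mul hε.le μ) hcc' S
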